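/- Let Γ ≤ D_{n₁} × D_{n₂} × D_{n₃} be a 2-injective 3-factor subdirect product with nᵢ ∉ {1,2,4} for all i ∈ {1,2,3}. Then Γ is a rotate-or-reflect group. -/

import Mathlib

/-- `Γ ≤ G₁ × G₂ × G₃` is a (3-factor) subdirect product:
the projection to each factor is surjective on `Γ`. -/
def IsSubdirect3 {G₁ G₂ G₃ : Type*} [Group G₁] [Group G₂] [Group G₃]
    (Γ : Subgroup (G₁ × G₂ × G₃)) : Prop :=
  (∀ x : G₁, ∃ g ∈ Γ, g.1 = x) ∧ (∀ x : G₂, ∃ g ∈ Γ, g.2.1 = x) ∧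
    (∀ x : G₃, ∃ g ∈ Γ, g.2.2 = x)

/-- `Γ ≤ G₁ × G₂ × G₃` is 2-injective: for each `i`, the projection of `Γ` onto
the product of the two factors other than `Gᵢ` is injective on `Γ`. -/
def IsTwoInjective3 {G₁ G₂ G₃ : Type*} [Group G₁] [Group G₂] [Group G₃]
    (Γ : Subgroup (G₁ × G₂ × G₃)) : Prop :=
  (∀ g ∈ Γ, ∀ h ∈ Γ, g.2.1 = h.2.1 → g.2.2 = h.2.2 → g = h) ∧
  (∀ g ∈ Γ, ∀ h ∈ Γ, g.1 = h.1 → g.2.2 = h.2.2 → g = h) ∧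
  (∀ g ∈ Γ, ∀ h ∈ Γ, g.1 = h.1 → g.2.1 = h.2.1 → g = h)

open DihedralGroup in
/-- An element of `Dₙ` is a rotation if it lies in the cyclic subgroup of
rotations `{r i}`; the identity counts as a rotation. -/
def IsRotation {n : ℕ} (x : DihedralGroup n) : Prop := ∃ i, x = r i

open DihedralGroup in
/-- An element of `Dₙ` is a reflection if it is of the form `sr i`. -/
def IsReflection {n : ℕ} (x : DihedralGroup n) : Prop := ∃ i, x = sr i

/-- A subgroup of a product of three dihedral groups is a rotate-or-reflect group if every
element is either a rotation in all components or a reflection in all components. -/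
def IsRotateOrReflect3 {n₁ n₂ n₃ : ℕ}
    (Γ : Subgroup (DihedralGroup n₁ × DihedralGroup n₂ × DihedralGroup n₃)) : Prop :=
  ∀ g ∈ Γ, (IsRotation g.1 ∧ IsRotation g.2.1 ∧ IsRotation g.2.2) ∨
    (IsReflection g.1 ∧ IsReflection g.2.1 ∧ IsReflection g.2.2)

/-- A subgroup of a product of two dihedral groups is a rotate-or-reflect group if every
element is either a rotation in both components or a reflection in both components. -/
def IsRotateOrReflect2 {n₁ n₂ : ℕ}
    (Γ : Subgroup (DihedralGroup n₁ × DihedralGroup n₂)) : Prop :=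
  ∀ g ∈ Γ, (IsRotation g.1 ∧ IsRotation g.2) ∨ (IsReflection g.1 ∧ IsReflection g.2)

/-!
Every commutator in `Dₙ` is a rotation, rotations commute with each other, and a reflection
inverts rotations. Hence, coordinatewise, the double commutator `⁅q, ⁅p, x⁆⁆` is `x ^ 4` where `p`
and `q` are reflections and `x` is a rotation, and it is trivial where `q` is a rotation, or where
`p` and `x` both are. If some element of `Γ` mixes rotations and reflections, one finds `p, q, x ∈ Γ`
with `x = r 1` in one coordinate and `⁅q, ⁅p, x⁆⁆` trivial in the two others: for a reflection in
a single coordinate take `p = q` that element; otherwise the mixed elements produce the patterns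
`(refl, refl, rot)` and `(refl, rot, refl)`. By 2-injectivity `r 1 ^ 4 = 1`, that is `nᵢ ∣ 4`.
-/

open DihedralGroup
open scoped commutatorElement

section Dihedral

variable {n : ℕ} {x y : DihedralGroup n}

theorem isRotation_or_isReflection (x : DihedralGroup n) : IsRotation x ∨ IsReflection x := by
  cases x with
  | r i => exact .inl ⟨i, rfl⟩
  | sr i => exact .inr ⟨i, rfl⟩

theorem IsRotation.mul_isReflection (hx : IsRotation x) (hy : IsReflection y) :
    IsReflection (x * y) := by
  obtain ⟨i, rfl⟩ := hx
  obtain ⟨j, rfl⟩ := hy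
  exact ⟨j - i, r_mul_sr i j⟩

theorem IsReflection.mul_isReflection (hx : IsReflection x) (hy : IsReflection y) :
    IsRotation (x * y) := by
  obtain ⟨i, rfl⟩ := hx
  obtain ⟨j, rfl⟩ := hy
  exact ⟨j - i, sr_mul_sr i j⟩

theorem IsReflection.sq_eq_one (hx : IsReflection x) : x ^ 2 = 1 := by
  obtain ⟨i, rfl⟩ := hx
  rw [pow_two, sr_mul_self]

theorem isRotation_commutatorElement (x y : DihedralGroup n) : IsRotation ⁅x, y⁆ := by
  cases x <;> cases y <;>
    simp only [commutatorElement_def, inv_r, inv_sr, r_mul_r, r_mul_sr, sr_mul_r, sr_mul_sr] <;>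
    exact ⟨_, rfl⟩

theorem IsRotation.commutatorElement_eq_one (hx : IsRotation x) (hy : IsRotation y) :
    ⁅x, y⁆ = 1 := by
  obtain ⟨i, rfl⟩ := hx
  obtain ⟨j, rfl⟩ := hy
  rw [commutatorElement_def, inv_r, inv_r, r_mul_r, r_mul_r, r_mul_r, ← r_zero]
  ring_nf

theorem IsReflection.commutatorElement_eq (hx : IsReflection x) (hy : IsRotation y) :
    ⁅x, y⁆ = (y ^ 2)⁻¹ := by
  obtain ⟨i, rfl⟩ := hx
  obtain ⟨j, rfl⟩ := hy
  simp only [commutatorElement_def, sr_mul_r, inv_sr, sr_mul_sr, sub_add_cancel_left, inv_r,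
    r_mul_r, r_pow, Nat.cast_ofNat, r.injEq]
  ring

theorem IsReflection.commutatorElement_commutatorElement {p q : DihedralGroup n}
    (hp : IsReflection p) (hq : IsReflection q) (hx : IsRotation x) : ⁅q, ⁅p, x⁆⁆ = x ^ 4 := by
  rw [hq.commutatorElement_eq (isRotation_commutatorElement p x), hp.commutatorElement_eq hx]
  group

theorem dvd_of_r_one_pow_eq_one {k : ℕ} (h : (r 1 : DihedralGroup n) ^ k = 1) : n ∣ k :=
  orderOf_r_one (n := n) ▸ orderOf_dvd_of_pow_eq_one h

end Dihedral

theorem not_dvd_four {n : ℕ} (h : n ∉ ({1, 2, 4} : Set ℕ)) : ¬ n ∣ 4 := by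
  intro hd
  have := Nat.le_of_dvd four_pos hd
  interval_cases n <;> simp_all

section Homomorphisms

variable {G : Type*} [Group G] {a b c : ℕ}

theorem pow_four_eq_one_of_commutatorElement {H₂ H₃ : Type*} [Group H₂] [Group H₃]
    {f₁ : G →* DihedralGroup a} {f₂ : G →* H₂} {f₃ : G →* H₃} (hker : f₂.ker ⊓ f₃.ker ≤ f₁.ker)
    {p q x : G} (hp : IsReflection (f₁ p)) (hq : IsReflection (f₁ q)) (hx : IsRotation (f₁ x))
    (h₂ : ⁅f₂ q, ⁅f₂ p, f₂ x⁆⁆ = 1) (h₃ : ⁅f₃ q, ⁅f₃ p, f₃ x⁆⁆ = 1) : f₁ x ^ 4 = 1 := by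
  have hmem : ⁅q, ⁅p, x⁆⁆ ∈ f₁.ker := by
    refine hker (Subgroup.mem_inf.mpr ⟨?_, ?_⟩) <;>
      rwa [MonoidHom.mem_ker, map_commutatorElement, map_commutatorElement]
  rwa [MonoidHom.mem_ker, map_commutatorElement, map_commutatorElement,
    hp.commutatorElement_commutatorElement hq hx] at hmem

variable {f₁ : G →* DihedralGroup a} {f₂ : G →* DihedralGroup b} {f₃ : G →* DihedralGroup c}

theorem dvd_four_of_isReflection_of_isRotation (hsurj : Function.Surjective f₁)
    (hker : f₂.ker ⊓ f₃.ker ≤ f₁.ker) {g : G} (h₁ : IsReflection (f₁ g))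
    (h₂ : IsRotation (f₂ g)) (h₃ : IsRotation (f₃ g)) : a ∣ 4 := by
  obtain ⟨x, hx⟩ := hsurj (r 1)
  refine dvd_of_r_one_pow_eq_one (hx ▸ pow_four_eq_one_of_commutatorElement hker h₁ h₁ ⟨1, hx⟩
    ?_ ?_)
  · exact h₂.commutatorElement_eq_one (isRotation_commutatorElement _ _)
  · exact h₃.commutatorElement_eq_one (isRotation_commutatorElement _ _)

theorem sq_eq_one_of_isReflection (hker : f₂.ker ⊓ f₃.ker ≤ f₁.ker) {g : G}
    (h₂ : IsReflection (f₂ g)) (h₃ : IsReflection (f₃ g)) : f₁ g ^ 2 = 1 := by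
  have hmem : g ^ 2 ∈ f₁.ker := by
    refine hker (Subgroup.mem_inf.mpr ⟨?_, ?_⟩) <;> rw [MonoidHom.mem_ker, map_pow]
    exacts [h₂.sq_eq_one, h₃.sq_eq_one]
  rwa [MonoidHom.mem_ker, map_pow] at hmem

end Homomorphisms

/-- What the coordinate projections `Γ → Hᵢ` of a 2-injective subdirect product satisfy; phrased
for homomorphisms so that the factors can be permuted freely. -/
structure IsTwoInjectiveSubdirect {G H₁ H₂ H₃ : Type*} [Group G] [Group H₁] [Group H₂]
    [Group H₃] (f₁ : G →* H₁) (f₂ : G →* H₂) (f₃ : G →* H₃) : Prop where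
  surjective₁ : Function.Surjective f₁
  surjective₂ : Function.Surjective f₂
  surjective₃ : Function.Surjective f₃
  ker₁ : f₂.ker ⊓ f₃.ker ≤ f₁.ker
  ker₂ : f₃.ker ⊓ f₁.ker ≤ f₂.ker
  ker₃ : f₁.ker ⊓ f₂.ker ≤ f₃.ker

theorem IsSubdirect3.isTwoInjectiveSubdirect {H₁ H₂ H₃ : Type*} [Group H₁] [Group H₂] [Group H₃]
    {Γ : Subgroup (H₁ × H₂ × H₃)} (hsd : IsSubdirect3 Γ) (hinj : IsTwoInjective3 Γ) :
    IsTwoInjectiveSubdirect ((MonoidHom.fst _ _).comp Γ.subtype)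
      ((MonoidHom.fst _ _).comp ((MonoidHom.snd _ _).comp Γ.subtype))
      ((MonoidHom.snd _ _).comp ((MonoidHom.snd _ _).comp Γ.subtype)) := by
  obtain ⟨hsd₁, hsd₂, hsd₃⟩ := hsd
  obtain ⟨hinj₁, hinj₂, hinj₃⟩ := hinj
  refine ⟨fun x => ?_, fun x => ?_, fun x => ?_, ?_, ?_, ?_⟩
  · obtain ⟨g, hg, rfl⟩ := hsd₁ x
    exact ⟨⟨g, hg⟩, rfl⟩
  · obtain ⟨g, hg, rfl⟩ := hsd₂ x
    exact ⟨⟨g, hg⟩, rfl⟩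
  · obtain ⟨g, hg, rfl⟩ := hsd₃ x
    exact ⟨⟨g, hg⟩, rfl⟩
  · rintro ⟨g, hg⟩ hker
    obtain ⟨h₂, h₃⟩ := Subgroup.mem_inf.mp hker
    exact congrArg Prod.fst (hinj₁ g hg 1 (one_mem Γ) h₂ h₃)
  · rintro ⟨g, hg⟩ hker
    obtain ⟨h₃, h₁⟩ := Subgroup.mem_inf.mp hker
    exact congrArg (·.2.1) (hinj₂ g hg 1 (one_mem Γ) h₁ h₃)
  · rintro ⟨g, hg⟩ hker
    obtain ⟨h₁, h₂⟩ := Subgroup.mem_inf.mp hker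
    exact congrArg (·.2.2) (hinj₃ g hg 1 (one_mem Γ) h₁ h₂)

namespace IsTwoInjectiveSubdirect

variable {G : Type*} [Group G] {a b c : ℕ}
  {f₁ : G →* DihedralGroup a} {f₂ : G →* DihedralGroup b} {f₃ : G →* DihedralGroup c}

theorem rotate (h : IsTwoInjectiveSubdirect f₁ f₂ f₃) : IsTwoInjectiveSubdirect f₂ f₃ f₁ :=
  ⟨h.surjective₂, h.surjective₃, h.surjective₁, h.ker₂, h.ker₃, h.ker₁⟩

theorem exists_eq_r_one_isRotation (h : IsTwoInjectiveSubdirect f₁ f₂ f₃) (ha : ¬ a ∣ 4)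
    (hc : ¬ c ∣ 4) : ∃ x, f₁ x = r 1 ∧ IsRotation (f₃ x) := by
  obtain ⟨x, hx⟩ := h.surjective₁ (r 1)
  refine ⟨x, hx, (isRotation_or_isReflection (f₃ x)).resolve_right fun h₃ => ?_⟩
  rcases isRotation_or_isReflection (f₂ x) with h₂ | h₂
  · exact hc (dvd_four_of_isReflection_of_isRotation h.surjective₃ h.ker₃ h₃ ⟨1, hx⟩ h₂)
  · have hsq := sq_eq_one_of_isReflection h.ker₁ h₂ h₃
    rw [hx] at hsq
    exact ha ((dvd_of_r_one_pow_eq_one hsq).trans (by norm_num))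

theorem false_of_isRotation_of_isReflection_of_isReflection (h : IsTwoInjectiveSubdirect f₁ f₂ f₃)
    (ha : ¬ a ∣ 4) (hc : ¬ c ∣ 4) {g : G} (h₁ : IsRotation (f₁ g)) (h₂ : IsReflection (f₂ g))
    (h₃ : IsReflection (f₃ g)) : False := by
  obtain ⟨y, hy₁, hy₃⟩ : ∃ y, IsReflection (f₁ y) ∧ IsRotation (f₃ y) := by
    obtain ⟨δ, hδ⟩ := h.surjective₁ (sr 0)
    have hδ₁ : IsReflection (f₁ δ) := ⟨0, hδ⟩
    rcases isRotation_or_isReflection (f₃ δ) with hδ₃ | hδ₃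
    · exact ⟨δ, hδ₁, hδ₃⟩
    · refine ⟨g * δ, ?_, ?_⟩ <;> rw [map_mul]
      exacts [h₁.mul_isReflection hδ₁, h₃.mul_isReflection hδ₃]
  have hy₂ : IsReflection (f₂ y) := (isRotation_or_isReflection (f₂ y)).resolve_left fun hy₂ =>
    ha (dvd_four_of_isReflection_of_isRotation h.surjective₁ h.ker₁ hy₁ hy₂ hy₃)
  obtain ⟨x, hx₁, hx₃⟩ := h.exists_eq_r_one_isRotation ha hc
  -- `y` has pattern `(refl, refl, rot)` and `g * y` has pattern `(refl, rot, refl)`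
  refine ha (dvd_of_r_one_pow_eq_one (hx₁ ▸ pow_four_eq_one_of_commutatorElement h.ker₁ (p := y)
    (q := g * y) hy₁ ?_ ⟨1, hx₁⟩ ?_ ?_))
  · rw [map_mul]
    exact h₁.mul_isReflection hy₁
  · rw [map_mul]
    exact (h₂.mul_isReflection hy₂).commutatorElement_eq_one (isRotation_commutatorElement _ _)
  · rw [hy₃.commutatorElement_eq_one hx₃, commutatorElement_one_right]

theorem false_of_isRotation_of_isReflection (h : IsTwoInjectiveSubdirect f₁ f₂ f₃)
    (ha : ¬ a ∣ 4) (hb : ¬ b ∣ 4) (hc : ¬ c ∣ 4) {g : G} (h₁ : IsRotation (f₁ g))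
    (h₂ : IsReflection (f₂ g)) : False := by
  rcases isRotation_or_isReflection (f₃ g) with h₃ | h₃
  · exact hb (dvd_four_of_isReflection_of_isRotation h.surjective₂ h.ker₂ h₂ h₃ h₁)
  · exact h.false_of_isRotation_of_isReflection_of_isReflection ha hc h₁ h₂ h₃

end IsTwoInjectiveSubdirect

theorem statement_5_general {n₁ n₂ n₃ : ℕ}
    (h₁ : n₁ ∉ ({1, 2, 4} : Set ℕ)) (h₂ : n₂ ∉ ({1, 2, 4} : Set ℕ))
    (h₃ : n₃ ∉ ({1, 2, 4} : Set ℕ))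
    (Γ : Subgroup (DihedralGroup n₁ × DihedralGroup n₂ × DihedralGroup n₃))
    (hsd : IsSubdirect3 Γ) (h2inj : IsTwoInjective3 Γ) :
    IsRotateOrReflect3 Γ := by
  have H := hsd.isTwoInjectiveSubdirect h2inj
  have hn₁ := not_dvd_four h₁
  have hn₂ := not_dvd_four h₂
  have hn₃ := not_dvd_four h₃
  intro g hg
  -- a mixed pattern has a rotation followed, cyclically, by a reflection
  rcases isRotation_or_isReflection g.1 with r₁ | s₁ <;>
    rcases isRotation_or_isReflection g.2.1 with r₂ | s₂ <;>
    rcases isRotation_or_isReflection g.2.2 with r₃ | s₃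
  · exact .inl ⟨r₁, r₂, r₃⟩
  · exact (H.rotate.false_of_isRotation_of_isReflection hn₂ hn₃ hn₁ (g := ⟨g, hg⟩) r₂ s₃).elim
  · exact (H.false_of_isRotation_of_isReflection hn₁ hn₂ hn₃ (g := ⟨g, hg⟩) r₁ s₂).elim
  · exact (H.false_of_isRotation_of_isReflection hn₁ hn₂ hn₃ (g := ⟨g, hg⟩) r₁ s₂).elim
  · exact (H.rotate.rotate.false_of_isRotation_of_isReflection hn₃ hn₁ hn₂ (g := ⟨g, hg⟩)
      r₃ s₁).elim
  · exact (H.rotate.false_of_isRotation_of_isReflection hn₂ hn₃ hn₁ (g := ⟨g, hg⟩) r₂ s₃).elim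
  · exact (H.rotate.rotate.false_of_isRotation_of_isReflection hn₃ hn₁ hn₂ (g := ⟨g, hg⟩)
      r₃ s₁).elim
  · exact .inr ⟨s₁, s₂, s₃⟩

theorem statement_5 {n₁ n₂ n₃ : ℕ}
    (hp₁ : 0 < n₁) (hp₂ : 0 < n₂) (hp₃ : 0 < n₃)
    (h₁ : n₁ ∉ ({1, 2, 4} : Set ℕ)) (h₂ : n₂ ∉ ({1, 2, 4} : Set ℕ))
    (h₃ : n₃ ∉ ({1, 2, 4} : Set ℕ))
    (Γ : Subgroup (DihedralGroup n₁ × DihedralGroup n₂ × DihedralGroup n₃))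
    (hsd : IsSubdirect3 Γ) (h2inj : IsTwoInjective3 Γ) :
    IsRotateOrReflect3 Γ :=
  statement_5_general h₁ h₂ h₃ Γ hsd h2inj
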